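/- arXiv:math/0202236 — 2 statements merged into one kernel-verified Lean document; each statement's English description precedes it below -/
import Mathlib

section
/- Let C : ℝ → ℝ³ be a C² curve parametrized by arclength with |C''(u)| ≤ K for all u. Then for all a < b and all s ∈ [a, b]: |(C(b) − C(a)) × C'(s)| ≤ (K/2)·(b − a)². -/
noncomputable section

/-- Cross product on `ℝ³`. -/
def cross3 (v w : EuclideanSpace ℝ (Fin 3)) : EuclideanSpace ℝ (Fin 3) :=
  WithLp.toLp 2 ![v 1 * w 2 - v 2 * w 1, v 2 * w 0 - v 0 * w 2, v 0 * w 1 - v 1 * w 0]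

/-!
Write `w = C'(s)` and `f(u) = C(u) × w`. Since `w × w = 0`, `f'(u) = (C'(u) − w) × w`, and as `|w| = 1`
and `C'` is `K`-Lipschitz, `|f'(u)| ≤ K |u − s|`. The function `u ↦ (K/2)(u − s)|u − s|` has exactly
this bound as derivative, so the mean value inequality gives
`|f(b) − f(a)| ≤ (K/2)((b − s)² + (s − a)²) ≤ (K/2)(b − a)²`.
-/

open Set Filter Topology Matrix

section CrossProduct

variable (v w : EuclideanSpace ℝ (Fin 3))

theorem cross3_eq_crossProduct : cross3 v w = WithLp.toLp 2 (v.ofLp ⨯₃ w.ofLp) := rfl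

theorem cross3_self : cross3 w w = 0 := by
  rw [cross3_eq_crossProduct, cross_self]
  rfl

theorem norm_cross3_sq : ‖cross3 v w‖ ^ 2 = ‖v‖ ^ 2 * ‖w‖ ^ 2 - inner ℝ v w ^ 2 := by
  simp only [← real_inner_self_eq_norm_sq, EuclideanSpace.inner_eq_star_dotProduct,
    cross3_eq_crossProduct, star_trivial, cross_dot_cross]
  rw [dotProduct_comm w.ofLp v.ofLp]
  ring

theorem norm_cross3_le : ‖cross3 v w‖ ≤ ‖v‖ * ‖w‖ := by
  refine (pow_le_pow_iff_left₀ (norm_nonneg _) (by positivity) two_ne_zero).1 ?_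
  rw [norm_cross3_sq, mul_pow]
  linarith [sq_nonneg (inner ℝ v w)]

def cross3Right : EuclideanSpace ℝ (Fin 3) →L[ℝ] EuclideanSpace ℝ (Fin 3) :=
  LinearMap.toContinuousLinearMap <|
    (WithLp.linearEquiv 2 ℝ (Fin 3 → ℝ)).symm.toLinearMap ∘ₗ crossProduct.flip w.ofLp ∘ₗ
      (WithLp.linearEquiv 2 ℝ (Fin 3 → ℝ)).toLinearMap

theorem cross3_sub_left (x : EuclideanSpace ℝ (Fin 3)) :
    cross3 (v - x) w = cross3 v w - cross3 x w :=
  map_sub (cross3Right w) v x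

theorem norm_cross3_le_norm_sub_mul : ‖cross3 v w‖ ≤ ‖v - w‖ * ‖w‖ := by
  simpa [cross3_sub_left, cross3_self] using norm_cross3_le (v - w) w

theorem HasDerivAt.cross3_const_right {f : ℝ → EuclideanSpace ℝ (Fin 3)}
    {f' : EuclideanSpace ℝ (Fin 3)} {x : ℝ} (hf : HasDerivAt f f' x) : HasDerivAt (fun u => cross3 (f u) w) (cross3 f' w) x :=
  (cross3Right w).hasFDerivAt.comp_hasDerivAt x hf

end CrossProduct

theorem hasDerivAt_mul_abs (x : ℝ) : HasDerivAt (fun y => y * |y|) (2 * |x|) x := by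
  rcases eq_or_ne x 0 with rfl | hx
  · rw [hasDerivAt_iff_tendsto_slope]
    have hslope : slope (fun y : ℝ => y * |y|) 0 =ᶠ[𝓝[≠] 0] fun y => |y| := by
      filter_upwards [self_mem_nhdsWithin] with y (hy : y ≠ 0)
      rw [slope_def_field, sub_zero, zero_mul, sub_zero, mul_div_cancel_left₀ _ hy]
    rw [tendsto_congr' hslope]
    simpa using (continuous_abs.tendsto (0 : ℝ)).mono_left nhdsWithin_le_nhds
  · have h := (hasDerivAt_id' x).mul (hasDerivAt_abs hx)
    rwa [one_mul, self_mul_sign, ← two_mul] at h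

theorem norm_sub_le_of_norm_deriv_le_mul_abs_sub {E : Type*} [NormedAddCommGroup E]
    [NormedSpace ℝ E] {f f' : ℝ → E} {K a b s : ℝ} (hf : ∀ u ∈ Icc a b, HasDerivAt f (f' u) u)
    (hbound : ∀ u ∈ Ico a b, ‖f' u‖ ≤ K * |u - s|) (hab : a ≤ b) :
    ‖f b - f a‖ ≤ K / 2 * ((b - s) * |b - s| - (a - s) * |a - s|) := by
  have hB (u : ℝ) : HasDerivAt (fun u => K / 2 * ((u - s) * |u - s| - (a - s) * |a - s|))
      (K * |u - s|) u :=
    ((((hasDerivAt_mul_abs (u - s)).comp u ((hasDerivAt_id' u).sub_const s)).sub_const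
      ((a - s) * |a - s|)).const_mul (K / 2)).congr_deriv (by ring)
  exact image_norm_le_of_norm_deriv_right_le_deriv_boundary (f := fun u => f u - f a)
    (fun u hu => ((hf u hu).sub_const _).continuousAt.continuousWithinAt)
    (fun u hu => ((hf u (Ico_subset_Icc_self hu)).sub_const _).hasDerivWithinAt)
    (by simp) hB hbound (right_mem_Icc.2 hab)

theorem norm_deriv_sub_le_of_norm_iteratedDeriv_two_le {E : Type*} [NormedAddCommGroup E]
    [NormedSpace ℝ E] {f : ℝ → E} {K : ℝ} (hf : ContDiff ℝ 2 f)
    (hK : ∀ u, ‖iteratedDeriv 2 f u‖ ≤ K) (u s : ℝ) : ‖deriv f u - deriv f s‖ ≤ K * |u - s| := by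
  have hf' := hf.differentiable_deriv_two
  simpa only [Real.norm_eq_abs] using convex_univ.norm_image_sub_le_of_norm_deriv_le
    (fun x _ => hf' x) (fun x _ => by simpa [iteratedDeriv_succ'] using hK x)
    (mem_univ s) (mem_univ u)

/-- If `C : ℝ → ℝ³` is a `C²` unit-speed curve with curvature
`|C''| ≤ K`, then for all `a < b` and all `s ∈ [a, b]`,
`|(C b − C a) × C'(s)| ≤ (K/2)·(b − a)²`. -/
theorem chord_cross_tangent_bound
    (C : ℝ → EuclideanSpace ℝ (Fin 3)) (K : ℝ)
    (hC : ContDiff ℝ 2 C)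
    (hunit : ∀ u : ℝ, ‖deriv C u‖ = 1)
    (hcurv : ∀ u : ℝ, ‖iteratedDeriv 2 C u‖ ≤ K) :
    ∀ a b : ℝ, a < b → ∀ s ∈ Set.Icc a b,
      ‖cross3 (C b - C a) (deriv C s)‖ ≤ K / 2 * (b - a) ^ 2 := by
  intro a b _ s ⟨has, hsb⟩
  have hK : 0 ≤ K := (norm_nonneg _).trans (hcurv 0)
  have hderiv (u : ℝ) : HasDerivAt (fun u => cross3 (C u) (deriv C s))
      (cross3 (deriv C u) (deriv C s)) u :=
    ((hC.differentiable two_ne_zero u).hasDerivAt).cross3_const_right _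
  have hbound (u : ℝ) : ‖cross3 (deriv C u) (deriv C s)‖ ≤ K * |u - s| := by
    calc _ ≤ ‖deriv C u - deriv C s‖ * ‖deriv C s‖ := norm_cross3_le_norm_sub_mul _ _
      _ ≤ K * |u - s| := by
        rw [hunit, mul_one]
        exact norm_deriv_sub_le_of_norm_iteratedDeriv_two_le hC hcurv u s
  calc ‖cross3 (C b - C a) (deriv C s)‖
      ≤ K / 2 * ((b - s) * |b - s| - (a - s) * |a - s|) := by
        rw [cross3_sub_left]
        exact norm_sub_le_of_norm_deriv_le_mul_abs_sub (fun u _ => hderiv u)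
          (fun u _ => hbound u) (has.trans hsb)
    _ = K / 2 * ((b - s) ^ 2 + (s - a) ^ 2) := by
        rw [abs_of_nonneg (sub_nonneg.2 hsb), abs_of_nonpos (sub_nonpos.2 has)]
        ring
    _ ≤ K / 2 * (b - a) ^ 2 := by
        nlinarith [mul_nonneg hK (mul_nonneg (sub_nonneg.2 hsb) (sub_nonneg.2 has))]

end
end

section
/- Let C : ℝ → ℝ³ be a C² curve parametrized by arclength with |C''(u)| ≤ K for all u, where K > 0, and let a < b with K·(b − a) ≤ π. Suppose 0 < |C(b) − C(a)| ≤ x where K·x ≤ 2/5. Then for every s ∈ [a, b], the angle between the tangent vector C'(s) and the chord vector C(b) − C(a) is at most (1.01²/2)·K·x; in particular sin of this angle is at most (1.01/2)·K·x. -/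
/-!
The tangent `T = C'` is a `K`-Lipschitz unit field. Chaining the triangle inequality for angles
over ever finer subdivisions of `[p, q]` gives `angle (T p) (T q) ≤ K |p - q|`. Writing the chord
as `∫ T`, its component along `T s` is at least `∫ cos (K |u - s|)` and its component orthogonal
to `T s` at most `∫ sin (K |u - s|)`; with `θ = K (b - a)` the ratio of the two integrals is at
most `tan (θ / 2)`, so the angle is at most `θ / 2`. Taking `s` to be the midpoint gives the
chord-arc bound `2 sin (θ / 2) ≤ K |C b - C a| ≤ K x`, which for `K x ≤ 2 / 5` forces
`θ ≤ 1.01 K x`.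
-/

open Real InnerProductGeometry Filter Set intervalIntegral
open MeasureTheory (volume ae_of_all)
open scoped RealInnerProductSpace Topology

theorem cos_add_sq_le {r : ℝ} (hr₀ : 0 ≤ r) (hr : r ≤ 1 / 2) :
    cos (r + r ^ 2) ≤ 1 - r ^ 2 / 2 := by
  have hle : r + r ^ 2 ≤ 3 / 2 * r := by nlinarith
  have hbound := (abs_le.mp (cos_bound (x := r + r ^ 2)
    (by rw [abs_of_nonneg (by positivity)]; linarith))).2
  rw [abs_of_nonneg (by positivity)] at hbound
  have h4 : (r + r ^ 2) ^ 4 ≤ (3 / 2 * r) ^ 4 := by gcongr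
  nlinarith [pow_le_pow_of_le_one hr₀ (by linarith) (by norm_num : 3 ≤ 4)]

theorem two_sub_cos_sub_cos_mul_cos_half_le {β γ : ℝ} (hβ : 0 ≤ β) (hγ : 0 ≤ γ)
    (hβγ : β + γ ≤ 2 * π) :
    (2 - cos β - cos γ) * cos ((β + γ) / 2) ≤ (sin β + sin γ) * sin ((β + γ) / 2) := by
  have hcos : cos ((β + γ) / 2) ≤ cos ((β - γ) / 2) := by
    rw [← cos_abs ((β - γ) / 2)]
    exact cos_le_cos_of_nonneg_of_le_pi (abs_nonneg _) (by linarith)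
      (abs_le.mpr ⟨by linarith, by linarith⟩)
  have hβ' : cos (β - (β + γ) / 2) = cos ((β - γ) / 2) := by ring_nf
  have hγ' : cos (γ - (β + γ) / 2) = cos ((β - γ) / 2) := by
    rw [← cos_neg]; ring_nf
  rw [cos_sub] at hβ' hγ'
  nlinarith

theorem le_of_two_mul_sin_half_le {θ z : ℝ} (hθ₀ : 0 ≤ θ) (hθ : θ ≤ π)
    (hsin : 2 * sin (θ / 2) ≤ z) (hz : z ≤ 2 / 5) : θ ≤ 1.01 * z := by
  have hz₀ : 0 ≤ z := by
    linarith [sin_nonneg_of_nonneg_of_le_pi (by linarith : 0 ≤ θ / 2) (by linarith : θ / 2 ≤ π)]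
  have hy : z / 2 ≤ sin (1.01 * (z / 2)) := by
    have hsq : 0 ≤ z * (4 / 25 - z ^ 2) := mul_nonneg hz₀ (by nlinarith)
    nlinarith [sin_ge_sub_cube (x := 1.01 * (z / 2)) (by positivity)]
  have hπ := pi_gt_three
  have := (strictMonoOn_sin.le_iff_le (a := θ / 2) (b := 1.01 * (z / 2))
    ⟨by linarith, by linarith⟩ ⟨by linarith, by linarith⟩).mp (by linarith)
  linarith

section UnitVectors

variable {E : Type*} [NormedAddCommGroup E] [InnerProductSpace ℝ E] {u v : E}

theorem angle_le_of_norm_sub_le (hu : ‖u‖ = 1) (hv : ‖v‖ = 1) {r : ℝ} (hr₀ : 0 ≤ r)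
    (hr : r ≤ 1 / 2) (h : ‖u - v‖ ≤ r) : angle u v ≤ r + r ^ 2 := by
  have hcos : cos (r + r ^ 2) ≤ cos (angle u v) := by
    rw [← inner_eq_cos_angle_of_norm_eq_one hu hv]
    have := norm_sub_sq_real u v
    rw [hu, hv] at this
    nlinarith [cos_add_sq_le hr₀ hr, norm_nonneg (u - v)]
  have hπ := pi_gt_three
  exact (strictAntiOn_cos.le_iff_ge ⟨by positivity, by nlinarith⟩
    ⟨angle_nonneg u v, angle_le_pi u v⟩).mp hcos

theorem cos_le_inner_of_angle_le (hu : ‖u‖ = 1) (hv : ‖v‖ = 1) {t : ℝ} (h : angle u v ≤ t)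
    (ht : t ≤ π) : cos t ≤ ⟪u, v⟫ :=
  inner_eq_cos_angle_of_norm_eq_one hu hv ▸ cos_le_cos_of_nonneg_of_le_pi (angle_nonneg u v) ht h

theorem norm_sub_inner_smul_eq (hu : ‖u‖ = 1) :
    ‖v - ⟪u, v⟫ • u‖ = sin (angle u v) * ‖v‖ := by
  have hsin := sin_angle_mul_norm_mul_norm u v
  rw [hu, one_mul, real_inner_self_eq_norm_sq, real_inner_self_eq_norm_sq, hu] at hsin
  rw [hsin, ← sqrt_sq (norm_nonneg _), norm_sub_sq_real, real_inner_smul_right, norm_smul,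
    hu, real_inner_comm v u, Real.norm_eq_abs, mul_one, sq_abs]
  ring_nf

theorem angle_le_of_norm_sub_inner_smul_le (hu : ‖u‖ = 1) {c φ : ℝ} (hc : 0 < c)
    (hφ₀ : 0 ≤ φ) (hφ : φ ≤ π / 2) (hinner : c ≤ ⟪u, v⟫)
    (horth : ‖v - ⟪u, v⟫ • u‖ * cos φ ≤ c * sin φ) : angle u v ≤ φ := by
  have hcos := cos_angle_mul_norm_mul_norm u v
  rw [hu, one_mul] at hcos
  rw [norm_sub_inner_smul_eq hu] at horth
  have hv : 0 < ‖v‖ := by nlinarith [abs_real_inner_le_norm u v, le_abs_self ⟪u, v⟫]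
  have hcos_pos : 0 < cos (angle u v) := by nlinarith
  have hsin : sin (angle u v) * cos φ ≤ cos (angle u v) * sin φ := by
    have hsinφ : 0 ≤ sin φ := sin_nonneg_of_nonneg_of_le_pi hφ₀ (by linarith)
    nlinarith
  by_contra! hlt
  have hα : angle u v < π / 2 := by
    by_contra! h
    linarith [cos_nonpos_of_pi_div_two_le_of_le h (by linarith [angle_le_pi u v])]
  have := sin_pos_of_pos_of_lt_pi (x := angle u v - φ) (by linarith) (by linarith)
  rw [sin_sub] at this
  linarith

end UnitVectors

theorem le_mul_sub_of_le_add_mul_sq {d : ℝ → ℝ → ℝ} {K M δ : ℝ} (hδ : 0 < δ)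
    (htri : ∀ x y z, d x z ≤ d x y + d y z)
    (hloc : ∀ x y, x ≤ y → y - x ≤ δ → d x y ≤ K * (y - x) + M * (y - x) ^ 2)
    {x y : ℝ} (hxy : x ≤ y) : d x y ≤ K * (y - x) := by
  have hchain : ∀ h, 0 ≤ h → h ≤ δ → ∀ n : ℕ, d x (x + n * h) ≤ n * (K * h + M * h ^ 2) := by
    intro h h₀ hh n
    induction n with
    | zero => simpa using hloc x x le_rfl (by simpa using hδ.le)
    | succ n ih =>
      have hstep := hloc (x + n * h) (x + (n + 1 : ℕ) * h) (by push_cast; linarith)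
        (by push_cast; linarith)
      calc d x (x + (n + 1 : ℕ) * h) ≤ d x (x + n * h) + d (x + n * h) (x + (n + 1 : ℕ) * h) :=
            htri _ _ _
        _ ≤ (n + 1 : ℕ) * (K * h + M * h ^ 2) := by
            push_cast at hstep ⊢
            ring_nf at hstep ⊢
            linarith
  have hbound : ∀ᶠ n : ℕ in atTop, d x y ≤ K * (y - x) + M * (y - x) ^ 2 / n := by
    obtain ⟨N, hN⟩ := exists_nat_ge ((y - x) / δ)
    filter_upwards [eventually_ge_atTop (max N 1)] with n hn
    have hn₀ : (0 : ℝ) < n := by exact_mod_cast (le_max_right N 1).trans hn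
    have hstep : (y - x) / n ≤ δ := by
      rw [div_le_iff₀ hn₀, ← div_le_iff₀' hδ]
      exact hN.trans (by exact_mod_cast (le_max_left N 1).trans hn)
    have := hchain ((y - x) / n) (by positivity) hstep n
    rw [mul_div_cancel₀ _ hn₀.ne', add_sub_cancel] at this
    convert this using 1
    field_simp
  have hlim : Tendsto (fun n : ℕ => K * (y - x) + M * (y - x) ^ 2 / n) atTop
      (𝓝 (K * (y - x))) := by
    simpa using tendsto_const_nhds.add (tendsto_const_div_atTop_nhds_zero_nat (M * (y - x) ^ 2))
  exact ge_of_tendsto hlim hbound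

theorem angle_le_mul_abs_sub {E : Type*} [NormedAddCommGroup E] [InnerProductSpace ℝ E]
    {T : ℝ → E} {K : ℝ} (hK : 0 < K) (hunit : ∀ t, ‖T t‖ = 1)
    (hlip : ∀ p q, ‖T p - T q‖ ≤ K * |p - q|) (p q : ℝ) :
    angle (T p) (T q) ≤ K * |p - q| := by
  wlog hpq : p ≤ q generalizing p q
  · rw [angle_comm, abs_sub_comm]
    exact this q p (le_of_not_ge hpq)
  rw [abs_sub_comm, abs_of_nonneg (sub_nonneg.2 hpq)]
  refine le_mul_sub_of_le_add_mul_sq (d := fun p q => angle (T p) (T q)) (M := K ^ 2)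
    (δ := 1 / (2 * K)) (by positivity) (fun _ _ _ => angle_le_angle_add_angle _ _ _) ?_ hpq
  intro x y hxy hδ
  have hr : K * (y - x) ≤ 1 / 2 := by
    rw [le_div_iff₀ (by positivity)] at hδ
    linarith
  have := angle_le_of_norm_sub_le (hunit x) (hunit y) (by nlinarith) hr
    (by simpa [abs_of_nonpos (sub_nonpos.2 hxy)] using hlip x y)
  linarith

theorem integral_comp_abs_sub {F : Type*} [NormedAddCommGroup F] [NormedSpace ℝ F]
    {f : ℝ → F} (hf : Continuous f) {a b s : ℝ} (hs : s ∈ Icc a b) :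
    ∫ u in a..b, f |u - s| = (∫ t in 0..s - a, f t) + ∫ t in 0..b - s, f t := by
  have hint : ∀ c d, IntervalIntegrable (fun u => f |u - s|) volume c d :=
    fun c d => (hf.comp (by fun_prop)).intervalIntegrable c d
  rw [← integral_add_adjacent_intervals (hint a s) (hint s b)]
  congr 1
  · rw [integral_congr (g := fun u => f (s - u)), integral_comp_sub_left, sub_self]
    intro u hu
    rw [uIcc_of_le hs.1] at hu
    simp only [abs_sub_comm u s, abs_of_nonneg (sub_nonneg.2 hu.2)]
  · rw [integral_congr (g := fun u => f (u - s)), integral_comp_sub_right, sub_self]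
    intro u hu
    rw [uIcc_of_le hs.2] at hu
    simp only [abs_of_nonneg (sub_nonneg.2 hu.1)]

theorem integral_cos_mul {K : ℝ} (hK : K ≠ 0) (L : ℝ) :
    ∫ t in 0..L, cos (K * t) = sin (K * L) / K := by
  simp [hK, div_eq_inv_mul]

theorem integral_sin_mul {K : ℝ} (hK : K ≠ 0) (L : ℝ) :
    ∫ t in 0..L, sin (K * t) = (1 - cos (K * L)) / K := by
  simp [hK, div_eq_inv_mul]

section UnitField

variable {E : Type*} [NormedAddCommGroup E] [InnerProductSpace ℝ E] [CompleteSpace E]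
  {T : ℝ → E} {K a b s : ℝ}

theorem sin_add_sin_le_mul_inner_integral (hK : 0 < K) (hT : Continuous T)
    (hunit : ∀ t, ‖T t‖ = 1) (hangle : ∀ p q, angle (T p) (T q) ≤ K * |p - q|)
    (harc : K * (b - a) ≤ π) (hs : s ∈ Icc a b) :
    sin (K * (s - a)) + sin (K * (b - s)) ≤ K * ⟪T s, ∫ u in a..b, T u⟫ := by
  have hpt : ∀ u ∈ Icc a b, cos (K * |u - s|) ≤ ⟪T s, T u⟫ := fun u hu =>
    cos_le_inner_of_angle_le (hunit s) (hunit u) (abs_sub_comm u s ▸ hangle s u)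
      (harc.trans' (by gcongr; exact abs_sub_le_of_le_of_le hu.1 hu.2 hs.1 hs.2))
  have hint := integral_mono_on (μ := volume) (hs.1.trans hs.2)
    ((by fun_prop : Continuous fun u => cos (K * |u - s|)).intervalIntegrable a b)
    ((continuous_const.inner hT).intervalIntegrable a b) hpt
  rw [integral_comp_abs_sub (f := fun t => cos (K * t)) (by fun_prop) hs,
    integral_cos_mul hK.ne', integral_cos_mul hK.ne'] at hint
  have hcomm := (innerSL ℝ (T s)).intervalIntegral_comp_comm
    (hT.intervalIntegrable (μ := volume) a b)
  simp only [innerSL_apply_apply] at hcomm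
  rw [← add_div, div_le_iff₀ hK, hcomm] at hint
  linarith

theorem mul_norm_integral_sub_inner_smul_le (hK : 0 < K) (hT : Continuous T)
    (hunit : ∀ t, ‖T t‖ = 1) (hangle : ∀ p q, angle (T p) (T q) ≤ K * |p - q|)
    (harc : K * (b - a) ≤ π / 2) (hs : s ∈ Icc a b) :
    K * ‖(∫ u in a..b, T u) - ⟪T s, ∫ u in a..b, T u⟫ • T s‖
      ≤ 2 - cos (K * (s - a)) - cos (K * (b - s)) := by
  let L : E →L[ℝ] E := ContinuousLinearMap.id ℝ E - (innerSL ℝ (T s)).smulRight (T s)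
  have hL : ∀ v, L v = v - ⟪T s, v⟫ • T s := fun v => by simp [L]
  have hpt : ∀ u ∈ Icc a b, ‖L (T u)‖ ≤ sin (K * |u - s|) := fun u hu => by
    rw [hL, norm_sub_inner_smul_eq (hunit s), hunit, mul_one]
    exact sin_le_sin_of_le_of_le_pi_div_two (by linarith [angle_nonneg (T s) (T u), pi_pos])
      (harc.trans' (by gcongr; exact abs_sub_le_of_le_of_le hu.1 hu.2 hs.1 hs.2))
      (abs_sub_comm u s ▸ hangle s u)
  have hint := norm_integral_le_of_norm_le (μ := volume) (f := fun u => L (T u))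
    (hs.1.trans hs.2) (ae_of_all _ fun u hu => hpt u (Ioc_subset_Icc_self hu))
    ((by fun_prop : Continuous fun u => sin (K * |u - s|)).intervalIntegrable a b)
  rw [L.intervalIntegral_comp_comm (hT.intervalIntegrable a b), hL,
    integral_comp_abs_sub (f := fun t => sin (K * t)) (by fun_prop) hs,
    integral_sin_mul hK.ne', integral_sin_mul hK.ne', ← add_div, le_div_iff₀ hK] at hint
  linarith

theorem two_mul_sin_half_le_mul_norm_integral (hK : 0 < K) (hT : Continuous T)
    (hunit : ∀ t, ‖T t‖ = 1) (hangle : ∀ p q, angle (T p) (T q) ≤ K * |p - q|)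
    (hab : a ≤ b) (harc : K * (b - a) ≤ π) :
    2 * sin (K * (b - a) / 2) ≤ K * ‖∫ u in a..b, T u‖ := by
  have hmid := sin_add_sin_le_mul_inner_integral (s := (a + b) / 2) hK hT hunit hangle harc
    ⟨by linarith, by linarith⟩
  have hinner := real_inner_le_norm (T ((a + b) / 2)) (∫ u in a..b, T u)
  rw [hunit, one_mul] at hinner
  calc 2 * sin (K * (b - a) / 2)
      = sin (K * ((a + b) / 2 - a)) + sin (K * (b - (a + b) / 2)) := by ring_nf
    _ ≤ K * ⟪T ((a + b) / 2), ∫ u in a..b, T u⟫ := hmid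
    _ ≤ K * ‖∫ u in a..b, T u‖ := by gcongr

theorem angle_integral_le_half_mul (hK : 0 < K) (hT : Continuous T)
    (hunit : ∀ t, ‖T t‖ = 1) (hangle : ∀ p q, angle (T p) (T q) ≤ K * |p - q|)
    (hab : a < b) (harc : K * (b - a) ≤ π / 2) (hs : s ∈ Icc a b) :
    angle (T s) (∫ u in a..b, T u) ≤ K * (b - a) / 2 := by
  set β := K * (s - a)
  set γ := K * (b - s)
  have hβ : 0 ≤ β := mul_nonneg hK.le (sub_nonneg.2 hs.1)
  have hγ : 0 ≤ γ := mul_nonneg hK.le (sub_nonneg.2 hs.2)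
  have hβγ : K * (b - a) = β + γ := by ring
  have hsin_pos : 0 < sin β + sin γ := by
    have hπ := pi_pos
    have hsβ := sin_nonneg_of_nonneg_of_le_pi hβ (by linarith)
    have hsγ := sin_nonneg_of_nonneg_of_le_pi hγ (by linarith)
    rcases hβ.lt_or_eq with hβ' | hβ'
    · linarith [sin_pos_of_pos_of_lt_pi hβ' (by linarith)]
    · have hγ' : 0 < γ := by nlinarith
      linarith [sin_pos_of_pos_of_lt_pi hγ' (by linarith)]
  have horth := mul_norm_integral_sub_inner_smul_le hK hT hunit hangle harc hs
  have htrig := two_sub_cos_sub_cos_mul_cos_half_le hβ hγ (by linarith [pi_pos])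
  rw [← hβγ] at htrig
  refine angle_le_of_norm_sub_inner_smul_le (hunit s) (div_pos hsin_pos hK) (by positivity)
    (by linarith) ?_ ?_
  · rw [div_le_iff₀' hK]
    exact sin_add_sin_le_mul_inner_integral hK hT hunit hangle (by linarith [pi_pos]) hs
  · have hcos : 0 ≤ cos (K * (b - a) / 2) :=
      cos_nonneg_of_neg_pi_div_two_le_of_le (by linarith [pi_pos]) (by linarith)
    rw [div_mul_eq_mul_div, le_div_iff₀' hK]
    nlinarith

end UnitField

theorem tangent_chord_angle_bound_general
    (C : ℝ → EuclideanSpace ℝ (Fin 3)) (K a b x : ℝ) (hK : 0 < K)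
    (hC : ContDiff ℝ 2 C)
    (hunit : ∀ u : ℝ, ‖deriv C u‖ = 1)
    (hcurv : ∀ u : ℝ, ‖iteratedDeriv 2 C u‖ ≤ K)
    (hab : a < b) (harc : K * (b - a) ≤ Real.pi)
    (hchord : ‖C b - C a‖ ≤ x) (hx : K * x ≤ 2 / 5) :
    ∀ s ∈ Set.Icc a b,
      InnerProductGeometry.angle (deriv C s) (C b - C a) ≤ 1.01 ^ 2 / 2 * K * x ∧
      Real.sin (InnerProductGeometry.angle (deriv C s) (C b - C a)) ≤ 1.01 / 2 * K * x := by
  intro s hs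
  have hT : ContDiff ℝ 1 (deriv C) := (contDiff_succ_iff_deriv (n := 1)).mp hC |>.2.2
  have hlip : ∀ p q, ‖deriv C p - deriv C q‖ ≤ K * |p - q| := fun p q => by
    simpa [Real.norm_eq_abs] using convex_univ.norm_image_sub_le_of_norm_deriv_le
      (fun u _ => hT.differentiable one_ne_zero u)
      (fun u _ => by simpa [iteratedDeriv_succ, iteratedDeriv_one] using hcurv u)
      (mem_univ q) (mem_univ p)
  have hangle := angle_le_mul_abs_sub hK hunit hlip
  have hchord_eq : ∫ u in a..b, deriv C u = C b - C a :=
    integral_deriv_eq_sub (fun u _ => hC.differentiable (by norm_num) u)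
      (hT.continuous.intervalIntegrable a b)
  have hθ : K * (b - a) ≤ 1.01 * (K * x) := by
    refine le_of_two_mul_sin_half_le (by nlinarith) harc ?_ hx
    calc 2 * sin (K * (b - a) / 2) ≤ K * ‖C b - C a‖ := hchord_eq ▸
          two_mul_sin_half_le_mul_norm_integral hK hT.continuous hunit hangle hab.le harc
      _ ≤ K * x := by gcongr
  have hα := angle_integral_le_half_mul hK hT.continuous hunit hangle hab
    (by linarith [pi_gt_three]) hs
  rw [hchord_eq] at hα
  have hKx : 0 ≤ K * x := by nlinarith
  constructor
  · nlinarith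
  · linarith [sin_le (angle_nonneg (deriv C s) (C b - C a))]

/-- If `C : ℝ → ℝ³` is a `C²` unit-speed curve with curvature
`|C''| ≤ K`, `K > 0`, and `a < b` with `K·(b − a) ≤ π`, `0 < |C b − C a| ≤ x`, and
`K·x ≤ 2/5`, then for every `s ∈ [a, b]` the angle between `C'(s)` and the chord
`C b − C a` is at most `(1.01²/2)·K·x`, and its sine is at most `(1.01/2)·K·x`. -/
theorem tangent_chord_angle_bound
    (C : ℝ → EuclideanSpace ℝ (Fin 3)) (K a b x : ℝ) (hK : 0 < K)
    (hC : ContDiff ℝ 2 C)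
    (hunit : ∀ u : ℝ, ‖deriv C u‖ = 1)
    (hcurv : ∀ u : ℝ, ‖iteratedDeriv 2 C u‖ ≤ K)
    (hab : a < b) (harc : K * (b - a) ≤ Real.pi)
    (hchordpos : 0 < ‖C b - C a‖) (hchord : ‖C b - C a‖ ≤ x) (hx : K * x ≤ 2 / 5) :
    ∀ s ∈ Set.Icc a b,
      InnerProductGeometry.angle (deriv C s) (C b - C a) ≤ 1.01 ^ 2 / 2 * K * x ∧
      Real.sin (InnerProductGeometry.angle (deriv C s) (C b - C a)) ≤ 1.01 / 2 * K * x :=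
  tangent_chord_angle_bound_general C K a b x hK hC hunit hcurv hab harc hchord hx
end
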